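/- arXiv:1806.00448 — 5 statements merged into one kernel-verified Lean document; each statement's English description precedes it below -/
import Mathlib

section
/- If D is a t-(n,r,λ) design over F_q, then the collection D^⊥ = {U^⊥ : U ∈ D} of orthogonal complements (with respect to the standard inner product on F_q^n) is a t-(n, n−r, λ') design over F_q with λ' = λ · [n−t choose r]_q / [n−t choose r−t]_q. -/
/-!
Since `U ↦ U^⊥` is an inclusion-reversing involution with `dim U^⊥ = n - dim U`, the blocks of
`D^⊥` through a `t`-space `T` are the perps of the blocks of `D` inside the `(n - t)`-space `T^⊥`.
The point is that this number does not depend on `T`. More generally, the number of blocks lying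
between an `i`-space `S` and a subspace `W` of codimension `j`, with `i + j ≤ t`, depends only on
`i` and `j`. For `j = 0` this follows from the design property by counting pairs
(block `⊇ S`, `t`-space `⊇ S`). To pass from `W'` to a hyperplane `W` of `W'`, count the pairs
`X ≤ U` where `U` is a block between `S` and `W'` not inside `W`, and `X ⊇ S` is an
`(i+1)`-space not inside `W`: each such `U` contains `[r-i, 1] - [r-i-1, 1]` of these `X`
(those not inside the hyperplane `U ⊓ W`), and each `X` lies in the same number of blocks below
`W'`, by induction.

Once the number `m` of blocks inside `T^⊥` is known to be constant, double counting pairs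
`(T, U)` with `U ≤ T^⊥` gives `[n, t] m = |D| [n-r, t]`; together with `|D| [r, t] = [n, t] λ` and
`[n-t, r] [r, t] = [n-t, r-t] [n-r, t]` this is the claim.
-/

open Matrix

/-- The orthogonal complement of a subspace of `F^n` with respect to the standard
bilinear form (dot product). -/
def perpSub {F : Type*} [Field F] {n : ℕ} (U : Submodule F (Fin n → F)) :
    Submodule F (Fin n → F) where
  carrier := {v | ∀ u ∈ U, dotProduct u v = 0}
  add_mem' := by
    intro a b ha hb u hu
    simp [dotProduct_add, ha u hu, hb u hu]
  zero_mem' := by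
    intro u hu
    simp
  smul_mem' := by
    intro c a ha u hu
    simp [dotProduct_smul, ha u hu]

/-- The number of `M`-dimensional subspaces of `F^N`; when `|F| = q` this is the
Gaussian binomial coefficient `[N choose M]_q`. -/
noncomputable def numSubspaces (F : Type*) [Field F] (N M : ℕ) : ℕ :=
  Set.ncard {W : Submodule F (Fin N → F) | Module.finrank F W = M}

open Module

section Perp

variable {F : Type*} [Field F] {n : ℕ}

lemma perpSub_eq_orthogonal (U : Submodule F (Fin n → F)) :
    perpSub U = (Matrix.toBilin' (1 : Matrix (Fin n) (Fin n) F)).orthogonal U := by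
  ext v
  simp [perpSub, LinearMap.BilinForm.mem_orthogonal_iff, Matrix.toBilin'_apply']

lemma nondegenerate_toBilin'_one :
    (Matrix.toBilin' (1 : Matrix (Fin n) (Fin n) F)).Nondegenerate := by
  rw [LinearMap.BilinForm.nondegenerate_toBilin'_iff_det_ne_zero, det_one]
  exact one_ne_zero

lemma finrank_perpSub (U : Submodule F (Fin n → F)) :
    finrank F (perpSub U) = n - finrank F U := by
  rw [perpSub_eq_orthogonal,
    LinearMap.BilinForm.finrank_orthogonal nondegenerate_toBilin'_one, finrank_fin_fun]

lemma perpSub_perpSub (U : Submodule F (Fin n → F)) : perpSub (perpSub U) = U := by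
  rw [perpSub_eq_orthogonal, perpSub_eq_orthogonal,
    LinearMap.BilinForm.orthogonal_orthogonal nondegenerate_toBilin'_one]
  intro u v h
  simpa [Matrix.toBilin'_apply', dotProduct_comm] using h

lemma perpSub_injective : Function.Injective (perpSub (F := F) (n := n)) :=
  Function.LeftInverse.injective perpSub_perpSub

lemma le_perpSub_comm {T U : Submodule F (Fin n → F)} : T ≤ perpSub U ↔ U ≤ perpSub T :=
  ⟨fun h u hu v hv => dotProduct_comm v u ▸ h hv u hu,
   fun h u hu v hv => dotProduct_comm v u ▸ h hv u hu⟩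

lemma ncard_perpSub_image_ge (D : Set (Submodule F (Fin n → F)))
    (T : Submodule F (Fin n → F)) :
    {V ∈ perpSub '' D | T ≤ V}.ncard = {U ∈ D | U ≤ perpSub T}.ncard := by
  rw [← Set.ncard_image_of_injective {U ∈ D | U ≤ perpSub T} perpSub_injective]
  congr 1
  ext V
  simp only [Set.mem_ofPred_eq, Set.mem_image]
  constructor
  · rintro ⟨⟨U, hUD, rfl⟩, hTU⟩
    exact ⟨U, ⟨hUD, le_perpSub_comm.mp hTU⟩, rfl⟩
  · rintro ⟨U, ⟨hUD, hUT⟩, rfl⟩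
    exact ⟨⟨U, hUD, rfl⟩, le_perpSub_comm.mpr hUT⟩

end Perp

lemma Set.ncard_mul_eq_ncard_mul {α β : Type*} [Finite α] [Finite β] {A : Set α} {B : Set β}
    (R : α → β → Prop) {c d : ℕ} (hA : ∀ a ∈ A, {b ∈ B | R a b}.ncard = c)
    (hB : ∀ b ∈ B, {a ∈ A | R a b}.ncard = d) : A.ncard * c = B.ncard * d := by
  classical
  have := Fintype.ofFinite α
  have := Fintype.ofFinite β
  simp only [Set.ncard_eq_toFinset_card'] at hA hB ⊢
  refine Finset.card_mul_eq_card_mul R (fun a ha => ?_) (fun b hb => ?_)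
  · rw [← hA a (by simpa using ha)]
    congr 1
    ext
    simp [Finset.bipartiteAbove]
  · rw [← hB b (by simpa using hb)]
    congr 1
    ext
    simp [Finset.bipartiteBelow]

section Subspaces

variable {F V : Type*} [Field F] [AddCommGroup V] [Module F V]

lemma Submodule.exists_finrank_eq {k : ℕ} (hk : k ≤ finrank F V) :
    ∃ X : Submodule F V, finrank F X = k := by
  obtain ⟨v, hv⟩ := exists_linearIndependent_of_le_finrank hk
  exact ⟨Submodule.span F (Set.range v), by rw [finrank_span_eq_card hv, Fintype.card_fin]⟩

lemma ncard_finrank_eq_of_linearEquiv {V' : Type*} [AddCommGroup V'] [Module F V']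
    (e : V ≃ₗ[F] V') (k : ℕ) :
    {X : Submodule F V | finrank F X = k}.ncard =
      {Y : Submodule F V' | finrank F Y = k}.ncard := by
  rw [← Set.ncard_image_of_injective _ (Submodule.orderIsoMapComap e).injective]
  congr 1
  ext Y
  refine ⟨?_, fun hY =>
    ⟨(Submodule.orderIsoMapComap e).symm Y, ?_, OrderIso.apply_symm_apply _ _⟩⟩
  · rintro ⟨X, hX, rfl⟩
    exact (LinearEquiv.finrank_map_eq e X).trans hX
  · rw [Submodule.orderIsoMapComap_symm_apply']
    exact (LinearEquiv.finrank_map_eq e.symm Y).trans hY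

variable [FiniteDimensional F V]

lemma Submodule.exists_le_finrank_eq_succ {W : Submodule F V} (hW : finrank F W < finrank F V) :
    ∃ W' : Submodule F V, W ≤ W' ∧ finrank F W' = finrank F W + 1 := by
  obtain ⟨x, hx⟩ := W.exists_of_finrank_lt hW
  have hxW : x ∉ W := by simpa using hx 1 one_ne_zero
  exact ⟨W ⊔ Submodule.span F {x}, le_sup_left, Submodule.finrank_sup_span_singleton hxW⟩

lemma finrank_inf_add_one {U W W' : Submodule F V}
    (hUW' : U ≤ W') (hWW' : W ≤ W') (hW' : finrank F W' = finrank F W + 1) (hUW : ¬ U ≤ W) :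
    finrank F (U ⊓ W : Submodule F V) + 1 = finrank F U := by
  have hlt : W < U ⊔ W := lt_of_le_of_ne le_sup_right fun h => hUW (h ▸ le_sup_left)
  have h₁ := Submodule.finrank_lt_finrank_of_lt hlt
  have h₂ := Submodule.finrank_mono (sup_le hUW' hWW')
  have h₃ := Submodule.finrank_sup_add_finrank_inf_eq U W
  omega

lemma finrank_comap_mkQ (S : Submodule F V) (Z : Submodule F (V ⧸ S)) :
    finrank F (Z.comap S.mkQ) = finrank F Z + finrank F S := by
  have hZ : (Z.comap S.mkQ).map S.mkQ = Z :=
    Submodule.map_comap_eq_of_surjective S.mkQ_surjective Z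
  have hiso := (Submodule.quotientQuotientEquivQuotient S (Z.comap S.mkQ)
    (Submodule.le_comap_mkQ S Z)).finrank_eq
  rw [hZ] at hiso
  have h₁ := Submodule.finrank_quotient_add_finrank Z
  have h₂ := Submodule.finrank_quotient_add_finrank S
  have h₃ := Submodule.finrank_quotient_add_finrank (Z.comap S.mkQ)
  omega

lemma ncard_finrank_eq_numSubspaces (k : ℕ) :
    {X : Submodule F V | finrank F X = k}.ncard = numSubspaces F (finrank F V) k :=
  ncard_finrank_eq_of_linearEquiv (LinearEquiv.ofFinrankEq _ _ (finrank_fin_fun F).symm) k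

lemma ncard_ge_finrank_eq (S : Submodule F V) {k : ℕ} (hk : finrank F S ≤ k) :
    {X : Submodule F V | S ≤ X ∧ finrank F X = k}.ncard =
      numSubspaces F (finrank F V - finrank F S) (k - finrank F S) := by
  rw [← Submodule.finrank_quotient S, ← ncard_finrank_eq_numSubspaces,
    ← Set.ncard_image_of_injective _ (Submodule.comap_injective_of_surjective S.mkQ_surjective)]
  congr 1
  ext X
  constructor
  · rintro ⟨hSX, hX⟩
    have hback : (X.map S.mkQ).comap S.mkQ = X := by
      rw [Submodule.comap_map_mkQ, sup_eq_right.mpr hSX]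
    have := finrank_comap_mkQ S (X.map S.mkQ)
    rw [hback] at this
    exact ⟨X.map S.mkQ, show finrank F _ = _ by omega, hback⟩
  · rintro ⟨Z, hZ, rfl⟩
    refine ⟨Submodule.le_comap_mkQ S Z, ?_⟩
    rw [finrank_comap_mkQ, show finrank F Z = _ from hZ]
    omega

lemma ncard_between_finrank_eq {S W : Submodule F V} (hSW : S ≤ W) {k : ℕ}
    (hk : finrank F S ≤ k) :
    {X : Submodule F V | S ≤ X ∧ X ≤ W ∧ finrank F X = k}.ncard =
      numSubspaces F (finrank F W - finrank F S) (k - finrank F S) := by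
  set S' := S.comap W.subtype
  have hS' : finrank F S' = finrank F S := by
    rw [← Submodule.finrank_map_subtype_eq, Submodule.map_comap_subtype, inf_eq_right.mpr hSW]
  rw [← hS', ← ncard_ge_finrank_eq S' (hS' ▸ hk),
    ← Set.ncard_image_of_injective _ (Submodule.map_injective_of_injective W.injective_subtype)]
  congr 1
  ext X
  constructor
  · rintro ⟨hSX, hXW, hX⟩
    have hback : (X.comap W.subtype).map W.subtype = X := by
      rw [Submodule.map_comap_subtype, inf_eq_right.mpr hXW]
    refine ⟨X.comap W.subtype, ⟨Submodule.comap_mono hSX, ?_⟩, hback⟩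
    rw [← Submodule.finrank_map_subtype_eq, hback, hX]
  · rintro ⟨Y, ⟨hSY, hY⟩, rfl⟩
    refine ⟨?_, Submodule.map_subtype_le W Y, by rw [Submodule.finrank_map_subtype_eq, hY]⟩
    calc S = S'.map W.subtype := by rw [Submodule.map_comap_subtype, inf_eq_right.mpr hSW]
      _ ≤ Y.map W.subtype := Submodule.map_mono hSY

lemma ncard_le_finrank_eq (W : Submodule F V) (k : ℕ) :
    {X : Submodule F V | X ≤ W ∧ finrank F X = k}.ncard = numSubspaces F (finrank F W) k := by
  simpa using ncard_between_finrank_eq (bot_le : ⊥ ≤ W) (k := k) (by simp)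

variable [Finite F]

instance : Finite (Submodule F V) :=
  have : Finite V := Module.finite_of_finite F
  Finite.of_injective _ SetLike.coe_injective

lemma ncard_between_not_le {S H W : Submodule F V} (hSH : S ≤ H) (hHW : H ≤ W) :
    {X : Submodule F V | S ≤ X ∧ X ≤ W ∧ ¬ X ≤ H ∧
        finrank F X = finrank F S + 1}.ncard =
      numSubspaces F (finrank F W - finrank F S) 1 -
        numSubspaces F (finrank F H - finrank F S) 1 := by
  have hset :
      {X : Submodule F V | S ≤ X ∧ X ≤ W ∧ ¬ X ≤ H ∧ finrank F X = finrank F S + 1} =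
      {X | S ≤ X ∧ X ≤ W ∧ finrank F X = finrank F S + 1} \
        {X | S ≤ X ∧ X ≤ H ∧ finrank F X = finrank F S + 1} := by
    ext X
    simp only [Set.mem_sdiff, Set.mem_ofPred_eq]
    tauto
  have hsub : {X : Submodule F V | S ≤ X ∧ X ≤ H ∧ finrank F X = finrank F S + 1} ⊆
      {X | S ≤ X ∧ X ≤ W ∧ finrank F X = finrank F S + 1} :=
    fun X hX => ⟨hX.1, hX.2.1.trans hHW, hX.2.2⟩
  rw [hset, Set.ncard_sdiff hsub,
    ncard_between_finrank_eq (hSH.trans hHW) (by omega), ncard_between_finrank_eq hSH (by omega),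
    Nat.add_sub_cancel_left]

end Subspaces

section NumSubspaces

variable {F : Type*} [Field F]

lemma numSubspaces_symm {N M : ℕ} (h : M ≤ N) :
    numSubspaces F N M = numSubspaces F N (N - M) := by
  rw [numSubspaces, numSubspaces, ← Set.ncard_image_of_injective _ perpSub_injective]
  congr 1
  ext V
  refine ⟨?_, fun hV => ⟨perpSub V, ?_, perpSub_perpSub V⟩⟩
  · rintro ⟨U, hU, rfl⟩
    rw [Set.mem_ofPred_eq, finrank_perpSub, hU]
  · rw [Set.mem_ofPred_eq, finrank_perpSub, hV]
    omega

variable [Finite F]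

lemma numSubspaces_pos {N M : ℕ} (h : M ≤ N) : 0 < numSubspaces F N M := by
  obtain ⟨X, hX⟩ := Submodule.exists_finrank_eq (F := F) (V := Fin N → F) (k := M)
    (by rwa [finrank_fin_fun])
  exact (Set.ncard_pos).mpr ⟨X, hX⟩

lemma numSubspaces_one_lt_succ (m : ℕ) :
    numSubspaces F m 1 < numSubspaces F (m + 1) 1 := by
  obtain ⟨H, hH⟩ := Submodule.exists_finrank_eq (F := F) (V := Fin (m + 1) → F) (k := m)
    (by simp)
  have hHtop : H < ⊤ := lt_top_iff_ne_top.mpr fun h => by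
    rw [h, finrank_top, finrank_fin_fun] at hH
    omega
  obtain ⟨x, -, hx⟩ := SetLike.exists_of_lt hHtop
  have hx0 : x ≠ 0 := fun h => hx (h ▸ H.zero_mem)
  have hlines := ncard_le_finrank_eq H 1
  rw [hH] at hlines
  rw [← hlines, numSubspaces]
  refine Set.ncard_lt_ncard ⟨fun X hX => hX.2, fun hsub => hx ?_⟩
  exact (hsub (finrank_span_singleton hx0)).1 (Submodule.mem_span_singleton_self x)

lemma numSubspaces_mul_numSubspaces {N r k : ℕ} (hkr : k ≤ r) :
    numSubspaces F N r * numSubspaces F r k =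
      numSubspaces F N k * numSubspaces F (N - k) (r - k) := by
  refine Set.ncard_mul_eq_ncard_mul (fun X Y => Y ≤ X) (fun X hX => ?_) (fun Y hY => ?_)
  · rw [← show finrank F X = r from hX, ← ncard_le_finrank_eq X k]
    congr 1
    ext Y
    simp only [Set.mem_ofPred_eq]
    tauto
  · have h := ncard_ge_finrank_eq Y (k := r) (by rw [show finrank F Y = k from hY]; exact hkr)
    rw [finrank_fin_fun, show finrank F Y = k from hY] at h
    rw [← h]
    congr 1
    ext X
    simp only [Set.mem_ofPred_eq]
    tauto

end NumSubspaces

section Design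

variable {F V : Type*} [Field F] [AddCommGroup V] [Module F V]

def IsSubspaceDesign (t r lam : ℕ) (D : Set (Submodule F V)) : Prop :=
  (∀ U ∈ D, finrank F U = r) ∧
    ∀ T : Submodule F V, finrank F T = t → {U ∈ D | T ≤ U}.ncard = lam

def blocksBetween (D : Set (Submodule F V)) (S W : Submodule F V) : Set (Submodule F V) :=
  {U ∈ D | S ≤ U ∧ U ≤ W}

/-- The q-analogue of the numbers `λ_{i,j}` of a set design: blocks containing a given `i`-set
and avoiding a given `j`-set. -/
def HasConstBlockCount (D : Set (Submodule F V)) (i j : ℕ) : Prop :=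
  ∃ c, ∀ S W : Submodule F V, S ≤ W → finrank F S = i → finrank F W + j = finrank F V →
    (blocksBetween D S W).ncard = c

lemma HasConstBlockCount.of_mul_eq {D : Set (Submodule F V)} {i j a K : ℕ} (ha : 0 < a)
    (h : ∀ S W : Submodule F V, S ≤ W → finrank F S = i → finrank F W + j = finrank F V →
      (blocksBetween D S W).ncard * a = K) :
    HasConstBlockCount D i j :=
  ⟨K / a, fun S W hSW hS hW => by rw [← h S W hSW hS hW, Nat.mul_div_cancel _ ha]⟩

variable [Finite F] [FiniteDimensional F V] {t r lam : ℕ} {D : Set (Submodule F V)}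

lemma IsSubspaceDesign.ncard_ge_mul_numSubspaces (hD : IsSubspaceDesign t r lam D)
    {S : Submodule F V} (hSt : finrank F S ≤ t) :
    {U ∈ D | S ≤ U}.ncard * numSubspaces F (r - finrank F S) (t - finrank F S) =
      numSubspaces F (finrank F V - finrank F S) (t - finrank F S) * lam := by
  rw [← ncard_ge_finrank_eq S hSt]
  refine Set.ncard_mul_eq_ncard_mul (fun U T => T ≤ U) (fun U ⟨hUD, hSU⟩ => ?_)
    (fun T ⟨hST, hT⟩ => ?_)
  · rw [← hD.1 U hUD, ← ncard_between_finrank_eq hSU hSt]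
    congr 1
    ext X
    simp only [Set.mem_ofPred_eq]
    tauto
  · rw [← hD.2 T hT]
    congr 1
    ext U
    simp only [Set.mem_ofPred_eq]
    exact ⟨fun ⟨⟨hUD, _⟩, hTU⟩ => ⟨hUD, hTU⟩,
      fun ⟨hUD, hTU⟩ => ⟨⟨hUD, hST.trans hTU⟩, hTU⟩⟩

lemma ncard_blocksBetween_not_le_mul (hr : ∀ U ∈ D, finrank F U = r) {S W W' : Submodule F V}
    (hSW : S ≤ W) (hWW' : W ≤ W') (hW' : finrank F W' = finrank F W + 1) {c : ℕ}
    (hc : ∀ X : Submodule F V, finrank F X = finrank F S + 1 → X ≤ W' →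
      (blocksBetween D X W').ncard = c) :
    {U ∈ blocksBetween D S W' | ¬ U ≤ W}.ncard *
        (numSubspaces F (r - finrank F S) 1 - numSubspaces F (r - finrank F S - 1) 1) =
      (numSubspaces F (finrank F W' - finrank F S) 1 -
        numSubspaces F (finrank F W - finrank F S) 1) * c := by
  rw [← ncard_between_not_le hSW hWW']
  refine Set.ncard_mul_eq_ncard_mul (fun U X => X ≤ U)
    (fun U ⟨⟨hUD, hSU, hUW'⟩, hUW⟩ => ?_) (fun X ⟨hSX, hXW', hXW, hX⟩ => ?_)
  · have hinf := finrank_inf_add_one hUW' hWW' hW' hUW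
    rw [hr U hUD] at hinf
    rw [show r - finrank F S - 1 = finrank F (U ⊓ W : Submodule F V) - finrank F S by omega,
      ← hr U hUD, ← ncard_between_not_le (le_inf hSU hSW) inf_le_left]
    congr 1
    ext X
    simp only [Set.mem_ofPred_eq, le_inf_iff]
    exact ⟨fun ⟨⟨hSX, _, hXW, hX⟩, hXU⟩ => ⟨hSX, hXU, fun h => hXW h.2, hX⟩,
      fun ⟨hSX, hXU, hXUW, hX⟩ =>
        ⟨⟨hSX, hXU.trans hUW', fun h => hXUW ⟨hXU, h⟩, hX⟩, hXU⟩⟩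
  · rw [← hc X hX hXW']
    congr 1
    ext U
    simp only [blocksBetween, Set.mem_ofPred_eq]
    exact ⟨fun ⟨⟨⟨hUD, _, hUW'⟩, _⟩, hXU⟩ => ⟨hUD, hXU, hUW'⟩,
      fun ⟨hUD, hXU, hUW'⟩ =>
        ⟨⟨⟨hUD, hSX.trans hXU, hUW'⟩, fun h => hXW (hXU.trans h)⟩, hXU⟩⟩

lemma IsSubspaceDesign.hasConstBlockCount_zero (hD : IsSubspaceDesign t r lam D) {i : ℕ}
    (hit : i ≤ t) (htr : t ≤ r) : HasConstBlockCount D i 0 := by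
  refine HasConstBlockCount.of_mul_eq (K := numSubspaces F (finrank F V - i) (t - i) * lam)
    (numSubspaces_pos (F := F) (N := r - i) (M := t - i) (by omega)) fun S W _ hS hW => ?_
  obtain rfl : W = ⊤ := Submodule.eq_top_of_finrank_eq hW
  have hblocks : blocksBetween D S ⊤ = {U ∈ D | S ≤ U} := by simp [blocksBetween]
  rw [hblocks, ← hS]
  exact hD.ncard_ge_mul_numSubspaces (by omega)

lemma IsSubspaceDesign.hasConstBlockCount_succ (hD : IsSubspaceDesign t r lam D) {i j : ℕ}
    (hir : i < r) (h₀ : HasConstBlockCount D i j) (h₁ : HasConstBlockCount D (i + 1) j) :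
    HasConstBlockCount D i (j + 1) := by
  obtain ⟨c₀, hc₀⟩ := h₀
  obtain ⟨c₁, hc₁⟩ := h₁
  set n := finrank F V
  set a := numSubspaces F (r - i) 1 - numSubspaces F (r - i - 1) 1
  set b := numSubspaces F (n - j - i) 1 - numSubspaces F (n - j - 1 - i) 1
  have ha : 0 < a := by
    have := numSubspaces_one_lt_succ (F := F) (r - i - 1)
    rw [show r - i - 1 + 1 = r - i by omega] at this
    omega
  refine HasConstBlockCount.of_mul_eq (K := c₀ * a - b * c₁) ha fun S W hSW hS hW => ?_
  obtain ⟨W', hWW', hW'⟩ := Submodule.exists_le_finrank_eq_succ (W := W) (by omega)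
  have hsplit := Set.ncard_inter_add_ncard_sdiff_eq_ncard (blocksBetween D S W') {U | U ≤ W}
  have hinter : blocksBetween D S W' ∩ {U | U ≤ W} = blocksBetween D S W := by
    ext U
    simp only [blocksBetween, Set.mem_inter_iff, Set.mem_ofPred_eq]
    exact ⟨fun ⟨⟨hUD, hSU, _⟩, hUW⟩ => ⟨hUD, hSU, hUW⟩,
      fun ⟨hUD, hSU, hUW⟩ => ⟨⟨hUD, hSU, hUW.trans hWW'⟩, hUW⟩⟩
  rw [hinter, hc₀ S W' (hSW.trans hWW') hS (by omega)] at hsplit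
  have hnotLe := ncard_blocksBetween_not_le_mul hD.1 hSW hWW' hW' (c := c₁)
    fun X hX hXW' => hc₁ X W' hXW' (by omega) (by omega)
  rw [hS, hW', show finrank F W = n - j - 1 by omega,
    show n - j - 1 + 1 - i = n - j - i by omega] at hnotLe
  refine Nat.eq_sub_of_add_eq ?_
  rw [← hsplit, add_mul, ← hnotLe]
  rfl

lemma IsSubspaceDesign.hasConstBlockCount (hD : IsSubspaceDesign t r lam D) (htr : t ≤ r)
    {i j : ℕ} (hij : i + j ≤ t) : HasConstBlockCount D i j := by
  induction j generalizing i with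
  | zero => exact hD.hasConstBlockCount_zero (by omega) htr
  | succ j ih => exact hD.hasConstBlockCount_succ (by omega) (ih (by omega)) (ih (by omega))

end Design

section Dual

variable {F : Type*} [Field F] [Finite F] {n t r lam : ℕ} {D : Set (Submodule F (Fin n → F))}

lemma IsSubspaceDesign.ncard_mul_numSubspaces (hD : IsSubspaceDesign t r lam D) :
    D.ncard * numSubspaces F r t = numSubspaces F n t * lam := by
  simpa using hD.ncard_ge_mul_numSubspaces (S := ⊥) (by simp)

lemma IsSubspaceDesign.numSubspaces_mul_eq_ncard_mul (hD : IsSubspaceDesign t r lam D) {m : ℕ}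
    (hm : ∀ T : Submodule F (Fin n → F), finrank F T = t →
      {U ∈ D | U ≤ perpSub T}.ncard = m) :
    numSubspaces F n t * m = D.ncard * numSubspaces F (n - r) t := by
  refine Set.ncard_mul_eq_ncard_mul (fun T U => U ≤ perpSub T) hm (fun U hU => ?_)
  rw [← hD.1 U hU, ← finrank_perpSub, ← ncard_le_finrank_eq]
  congr 1
  ext T
  simp only [Set.mem_ofPred_eq]
  rw [le_perpSub_comm]
  tauto

lemma IsSubspaceDesign.ncard_le_perpSub_mul (hD : IsSubspaceDesign t r lam D) (htr : t ≤ r)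
    (hrn : r ≤ n) (T : Submodule F (Fin n → F)) (hT : finrank F T = t) :
    {U ∈ D | U ≤ perpSub T}.ncard * numSubspaces F (n - t) (r - t) =
      lam * numSubspaces F (n - t) r := by
  obtain ⟨m, hm⟩ := hD.hasConstBlockCount htr (i := 0) (j := t) (by omega)
  have hmT : ∀ T : Submodule F (Fin n → F), finrank F T = t →
      {U ∈ D | U ≤ perpSub T}.ncard = m := fun T hT => by
    rw [← hm ⊥ (perpSub T) bot_le (finrank_bot F _)
      (by rw [finrank_perpSub, finrank_fin_fun]; omega)]
    simp [blocksBetween]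
  have e₁ := hD.numSubspaces_mul_eq_ncard_mul hmT
  have e₂ := hD.ncard_mul_numSubspaces
  have e₃ := numSubspaces_mul_numSubspaces (F := F) (N := n - t) (show r - t ≤ r by omega)
  rw [← numSubspaces_symm htr, show n - t - (r - t) = n - r by omega,
    show r - (r - t) = t by omega] at e₃
  have hpos :=
    Nat.mul_pos (numSubspaces_pos (F := F) htr) (numSubspaces_pos (F := F) (htr.trans hrn))
  rw [hmT T hT]
  refine Nat.eq_of_mul_eq_mul_right hpos ?_
  zify at e₁ e₂ e₃ ⊢
  linear_combination (numSubspaces F (n - t) (r - t) * numSubspaces F r t : ℤ) * e₁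
    + (numSubspaces F (n - t) (r - t) * numSubspaces F (n - r) t : ℤ) * e₂
    - ((lam : ℤ) * numSubspaces F n t) * e₃

end Dual

theorem stmt_6_general {F : Type*} [Field F] [Fintype F] {n r t lam : ℕ}
    (htr : t ≤ r) (hrn : r ≤ n)
    (D : Set (Submodule F (Fin n → F)))
    (hblocks : ∀ U ∈ D, Module.finrank F U = r)
    (hdesign : ∀ T : Submodule F (Fin n → F), Module.finrank F T = t →
      {U ∈ D | T ≤ U}.ncard = lam) :
    (∀ V ∈ perpSub '' D, Module.finrank F V = n - r) ∧
    (∀ T : Submodule F (Fin n → F), Module.finrank F T = t →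
      {V ∈ perpSub '' D | T ≤ V}.ncard * numSubspaces F (n - t) (r - t) =
        lam * numSubspaces F (n - t) r) := by
  have hD : IsSubspaceDesign t r lam D := ⟨hblocks, hdesign⟩
  refine ⟨?_, fun T hT => ?_⟩
  · rintro _ ⟨U, hU, rfl⟩
    rw [finrank_perpSub, hblocks U hU]
  · rw [ncard_perpSub_image_ge]
    exact hD.ncard_le_perpSub_mul htr hrn T hT

theorem stmt_6 {F : Type*} [Field F] [Fintype F] {n r t lam : ℕ}
    (htpos : 1 ≤ t) (htr : t ≤ r) (hrn : r ≤ n)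
    (D : Set (Submodule F (Fin n → F)))
    (hblocks : ∀ U ∈ D, Module.finrank F U = r)
    (hdesign : ∀ T : Submodule F (Fin n → F), Module.finrank F T = t →
      {U ∈ D | T ≤ U}.ncard = lam) :
    (∀ V ∈ perpSub '' D, Module.finrank F V = n - r) ∧
    (∀ T : Submodule F (Fin n → F), Module.finrank F T = t →
      {V ∈ perpSub '' D | T ≤ V}.ncard * numSubspaces F (n - t) (r - t) =
        lam * numSubspaces F (n - t) r) :=
  stmt_6_general htr hrn D hblocks hdesign
end

section
/- Intersection numbers of subspace designs: let D be a t-(n,r,λ) design over F_q, and let I, J be subspaces of F_q^n of dimensions i, j with i + j ≤ t and I ∩ J = {0}. Then the number of blocks U ∈ D with I ⊆ U and J ∩ U = {0} equals q^{j(r−i)} · λ · [n−i−j choose r−i]_q / [n−t choose r−t]_q; in particular it depends only on i and j. -/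
/-!
Both `D` and the set of all `r`-subspaces are `t`-designs, the latter with
`λ' = [n-t choose r-t]_q`, so `λ' · #{U ∈ D | T ≤ U} = λ · #{U | dim U = r, T ≤ U}`
for every `t`-space `T`. This proportionality descends to all pairs `(I, J)` with
`dim I + dim J ≤ t`: to smaller `I` by double counting flags `I ≤ T ≤ U` with `dim T = t`,
and to larger `J` by writing `J = J₀ ⊔ ⟨v⟩` and splitting the blocks avoiding `J₀` according
to whether they meet `J`, in which case they contain exactly one vector `w + v` with `w ∈ J₀`.

For the set of all `r`-spaces the count is explicit: after quotienting by `I`, an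
`(r-i)`-space `W` avoiding `J` is a complement of `J` in `J ⊔ W`, and the complements of a
`j`-space in an `(m + j)`-space correspond to the linear maps `F^m → F^j`, which gives the
factor `q^{j(r-i)}`.
-/

open Module Submodule

theorem Set.ncard_eq_mul_of_ncard_fiber_eq {α β : Type*} {s : Set α} {t : Set β} {f : α → β}
    (hs : s.Finite) (ht : t.Finite) (hf : Set.MapsTo f s t) {c : ℕ}
    (hc : ∀ b ∈ t, {a ∈ s | f a = b}.ncard = c) : s.ncard = c * t.ncard := by
  classical
  rw [Set.ncard_eq_toFinset_card s hs, Set.ncard_eq_toFinset_card t ht,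
    Finset.card_eq_sum_card_fiberwise (f := f) (t := ht.toFinset) (by simpa using hf),
    Finset.sum_congr rfl (g := fun _ => c), Finset.sum_const, smul_eq_mul, mul_comm]
  intro b hb
  rw [← hc b (by simpa using hb), ← Set.ncard_coe_finset, Finset.coe_filter]
  simp

theorem numSubspaces_pos_s7 (F : Type*) [Field F] [Finite F] {m k : ℕ} (h : k ≤ m) :
    0 < numSubspaces F m k := by
  obtain ⟨f, hf⟩ := exists_linearIndependent_of_le_finrank (R := F) (M := Fin m → F)
    (by simpa using h)
  refine (Set.ncard_pos (Set.toFinite _)).2 ⟨span F (Set.range f), ?_⟩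
  exact (finrank_span_eq_card hf).trans (Fintype.card_fin k)

section Subspaces

variable {F V W : Type*} [Field F] [AddCommGroup V] [Module F V] [AddCommGroup W] [Module F W]

theorem finrank_map_add_finrank_inf_ker [FiniteDimensional F V] (f : V →ₗ[F] W)
    (U : Submodule F V) :
    finrank F (U.map f) + finrank F ↥(U ⊓ LinearMap.ker f) = finrank F U := by
  have h := LinearMap.finrank_range_add_finrank_ker (f.domRestrict U)
  rwa [LinearMap.range_domRestrict, LinearMap.ker_domRestrict, ← finrank_map_subtype_eq,
    map_comap_subtype] at h

theorem finrank_map_add_finrank_ker_of_le [FiniteDimensional F V] {f : V →ₗ[F] W}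
    {U : Submodule F V} (h : LinearMap.ker f ≤ U) :
    finrank F (U.map f) + finrank F (LinearMap.ker f) = finrank F U := by
  rw [← finrank_map_add_finrank_inf_ker f U, inf_eq_right.mpr h]

theorem finrank_map_of_disjoint_ker [FiniteDimensional F V] {f : V →ₗ[F] W}
    {U : Submodule F V} (h : Disjoint U (LinearMap.ker f)) :
    finrank F (U.map f) = finrank F U := by
  rw [← finrank_map_add_finrank_inf_ker f U, h.eq_bot, finrank_bot, add_zero]

theorem disjoint_of_disjoint_map {f : V →ₗ[F] W} {J U : Submodule F V}
    (hJ : Disjoint J (LinearMap.ker f)) (h : Disjoint (J.map f) (U.map f)) : Disjoint J U :=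
  disjoint_def.2 fun x hxJ hxU =>
    disjoint_def.1 hJ x hxJ (disjoint_def.1 h _ (mem_map_of_mem hxJ) (mem_map_of_mem hxU))

theorem finrank_comap_subtype_of_le {X U : Submodule F V} (h : U ≤ X) :
    finrank F (U.comap X.subtype) = finrank F U :=
  (comapSubtypeEquivOfLe h).finrank_eq

theorem isCompl_comap_subtype_iff {X J U : Submodule F V} (hJ : J ≤ X) (hU : U ≤ X) :
    IsCompl (J.comap X.subtype) (U.comap X.subtype) ↔ Disjoint J U ∧ J ⊔ U = X := by
  have hinj := map_injective_of_injective X.injective_subtype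
  rw [isCompl_iff, disjoint_iff, codisjoint_iff, disjoint_iff, ← hinj.eq_iff, ← hinj.eq_iff,
    map_inf _ X.injective_subtype, Submodule.map_sup, map_comap_subtype, map_comap_subtype,
    inf_of_le_right hJ, inf_of_le_right hU, Submodule.map_bot, Submodule.map_top, range_subtype]

theorem finrank_sup_span_singleton_le [FiniteDimensional F V] (I : Submodule F V) (x : V) :
    finrank F ↥(I ⊔ span F {x}) ≤ finrank F I + 1 :=
  (finrank_add_le_finrank_add_finrank I _).trans
    (Nat.add_le_add_left ((finrank_span_le_card {x}).trans (by simp)) _)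

theorem not_disjoint_sup_span_singleton_iff {J U : Submodule F V} {v : V} (hv : v ∉ J)
    (hJU : Disjoint J U) : ¬Disjoint (J ⊔ span F {v}) U ↔ ∃ w ∈ J, w + v ∈ U := by
  constructor
  · intro h
    obtain ⟨x, hx, hxU, hx0⟩ : ∃ x ∈ J ⊔ span F {v}, x ∈ U ∧ x ≠ 0 := by
      simpa [disjoint_def] using h
    obtain ⟨y, hy, z, hz, rfl⟩ := mem_sup.1 hx
    obtain ⟨c, rfl⟩ := mem_span_singleton.1 hz
    have hc : c ≠ 0 := by
      rintro rfl
      exact hx0 (disjoint_def.1 hJU _ (by simpa using hy) (by simpa using hxU))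
    refine ⟨c⁻¹ • y, J.smul_mem _ hy, ?_⟩
    have : c⁻¹ • y + v = c⁻¹ • (y + c • v) := by
      rw [smul_add, smul_smul, inv_mul_cancel₀ hc, one_smul]
    exact this ▸ U.smul_mem _ hxU
  · rintro ⟨w, hw, hwv⟩ h
    have : w + v = 0 := disjoint_def.1 h _
      (add_mem (mem_sup_left hw) (mem_sup_right (mem_span_singleton_self v))) hwv
    exact hv ((neg_eq_of_add_eq_zero_right this) ▸ J.neg_mem hw)

theorem exists_eq_sup_span_singleton [FiniteDimensional F V] {J : Submodule F V} {j : ℕ}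
    (hJ : finrank F J = j + 1) :
    ∃ (J₀ : Submodule F V) (v : V), finrank F J₀ = j ∧ v ∉ J₀ ∧ J₀ ⊔ span F {v} = J := by
  obtain ⟨f, hf⟩ := exists_linearIndependent_of_le_finrank (R := F) (M := J) (n := j) (by omega)
  set J₀ := (span F (Set.range f)).map J.subtype
  have hJ₀ : finrank F J₀ = j := by
    rw [finrank_map_subtype_eq, finrank_span_eq_card hf, Fintype.card_fin]
  obtain ⟨v, hvJ, hvJ₀⟩ := SetLike.exists_of_lt <|
    (map_subtype_le J (span F (Set.range f))).lt_of_ne fun h => by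
      have : finrank F J₀ = finrank F J := congrArg (fun K : Submodule F V => finrank F K) h
      omega
  refine ⟨J₀, v, hJ₀, hvJ₀, eq_of_le_of_finrank_eq ?_ ?_⟩
  · exact sup_le (map_subtype_le J _) ((span_singleton_le_iff_mem v J).2 hvJ)
  · rw [finrank_sup_span_singleton hvJ₀, hJ₀, hJ]

end Subspaces

section Counting

variable {F V : Type*} [Field F] [AddCommGroup V] [Module F V]

theorem ncard_setOf_le_comap_subtype (X : Submodule F V) (P : Submodule F X → Prop) :
    {U : Submodule F V | U ≤ X ∧ P (U.comap X.subtype)}.ncard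
      = {U : Submodule F X | P U}.ncard := by
  rw [← Set.ncard_image_of_injective _ (map_injective_of_injective X.injective_subtype)]
  congr 1
  ext U
  constructor
  · rintro ⟨hUX, hU⟩
    exact ⟨_, hU, by rw [map_comap_subtype, inf_of_le_right hUX]⟩
  · rintro ⟨U, hU, rfl⟩
    exact ⟨map_subtype_le X U, by rwa [comap_map_eq_of_injective X.injective_subtype]⟩

theorem ncard_setOf_le_map_mkQ (p : Submodule F V) (P : Submodule F (V ⧸ p) → Prop) :
    {U : Submodule F V | p ≤ U ∧ P (U.map p.mkQ)}.ncard
      = {U : Submodule F (V ⧸ p) | P U}.ncard := by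
  rw [← Set.ncard_image_of_injective _ (comap_injective_of_surjective p.mkQ_surjective)]
  congr 1
  ext U
  constructor
  · rintro ⟨hpU, hU⟩
    exact ⟨_, hU, by rw [comap_map_mkQ, sup_of_le_right hpU]⟩
  · rintro ⟨U, hU, rfl⟩
    refine ⟨?_, by rwa [map_comap_eq_of_surjective p.mkQ_surjective]⟩
    simpa using LinearMap.ker_le_comap (p := U) p.mkQ

theorem ncard_setOf_finrank_eq [FiniteDimensional F V] (k : ℕ) :
    {U : Submodule F V | finrank F U = k}.ncard = numSubspaces F (finrank F V) k := by
  obtain ⟨e⟩ : Nonempty (V ≃ₗ[F] (Fin (finrank F V) → F)) := ⟨(Module.finBasis F V).equivFun⟩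
  rw [numSubspaces, ← Set.ncard_image_of_injective _
    (map_injective_of_injective (f := (e : V →ₗ[F] Fin (finrank F V) → F)) e.injective)]
  congr 1
  ext U
  constructor
  · rintro ⟨U, rfl, rfl⟩
    exact e.finrank_map_eq U
  · intro hU
    have hU' : finrank F (U.map (e.symm : (Fin (finrank F V) → F) →ₗ[F] V)) = k :=
      (e.symm.finrank_map_eq U).trans hU
    exact ⟨_, hU', by rw [← map_comp]; simp⟩

variable [Fintype F] [Finite V]

theorem ncard_setOf_isCompl (p : Submodule F V) :
    {q : Submodule F V | IsCompl p q}.ncard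
      = Fintype.card F ^ (finrank F p * (finrank F V - finrank F p)) := by
  obtain ⟨q, hq⟩ := p.exists_isCompl
  -- a projection onto `p` is determined by its restriction to `q`, which is arbitrary
  let e : {f : V →ₗ[F] p // ∀ x : p, f x = x} ≃ (q →ₗ[F] p) :=
    { toFun := fun f => f.1.domRestrict q
      invFun := fun g => ⟨LinearMap.ofIsCompl hq LinearMap.id g,
        fun x => LinearMap.ofIsCompl_apply_left hq x⟩
      left_inv := fun f => Subtype.ext (LinearMap.ofIsCompl_eq hq (fun x => (f.2 x).symm)
        fun _ => rfl)
      right_inv := fun g => LinearMap.ext (LinearMap.ofIsCompl_apply_right hq) }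
  rw [← Nat.card_coe_set_eq]
  refine (Nat.card_congr (p.isComplEquivProj.trans e)).trans ?_
  rw [Module.natCard_eq_pow_finrank (K := F), Nat.card_eq_fintype_card, finrank_linearMap,
    ← finrank_add_eq_of_isCompl hq, Nat.add_sub_cancel_left, mul_comm]

theorem ncard_setOf_disjoint_sup_eq {J Y : Submodule F V} (hJY : J ≤ Y) :
    {U : Submodule F V | Disjoint J U ∧ J ⊔ U = Y}.ncard
      = Fintype.card F ^ (finrank F J * (finrank F Y - finrank F J)) := by
  have : {U : Submodule F V | Disjoint J U ∧ J ⊔ U = Y}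
      = {U | U ≤ Y ∧ IsCompl (J.comap Y.subtype) (U.comap Y.subtype)} := by
    ext U
    refine ⟨fun h => ?_, fun ⟨hUY, h⟩ => (isCompl_comap_subtype_iff hJY hUY).1 h⟩
    have hUY : U ≤ Y := h.2 ▸ le_sup_right
    exact ⟨hUY, (isCompl_comap_subtype_iff hJY hUY).2 h⟩
  rw [this, ncard_setOf_le_comap_subtype Y (IsCompl (J.comap Y.subtype)), ncard_setOf_isCompl,
    finrank_comap_subtype_of_le hJY]

theorem ncard_setOf_finrank_eq_disjoint (J : Submodule F V) (k : ℕ) :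
    {U : Submodule F V | finrank F U = k ∧ Disjoint J U}.ncard
      = Fintype.card F ^ (finrank F J * k) * numSubspaces F (finrank F V - finrank F J) k := by
  have : Finite (V ⧸ J) := Module.finite_of_finite F
  rw [← finrank_quotient, ← ncard_setOf_finrank_eq]
  -- the fibre of `U ↦ U.map J.mkQ` over `X` is the set of complements of `J` in `X.comap J.mkQ`
  refine Set.ncard_eq_mul_of_ncard_fiber_eq (f := fun U => U.map J.mkQ) (Set.toFinite _)
    (Set.toFinite _) (fun U hU => ?_) (fun X hX => ?_)
  · exact (finrank_map_of_disjoint_ker (by rw [ker_mkQ]; exact hU.2.symm)).trans hU.1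
  set Y := X.comap J.mkQ
  have hJY : J ≤ Y := by simpa using LinearMap.ker_le_comap (p := X) J.mkQ
  have hY : finrank F Y = k + finrank F J := by
    have h := finrank_map_add_finrank_ker_of_le (f := J.mkQ) (U := Y) (by rwa [ker_mkQ])
    rw [map_comap_eq_of_surjective J.mkQ_surjective, ker_mkQ, hX] at h
    omega
  have hfiber : {U ∈ {U : Submodule F V | finrank F U = k ∧ Disjoint J U} | U.map J.mkQ = X}
      = {U | Disjoint J U ∧ J ⊔ U = Y} := by
    ext U
    have hJU : J ⊔ U = (U.map J.mkQ).comap J.mkQ := by rw [comap_map_mkQ]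
    constructor
    · rintro ⟨⟨-, hd⟩, rfl⟩
      exact ⟨hd, hJU⟩
    · rintro ⟨hd, hs⟩
      refine ⟨⟨?_, hd⟩, comap_injective_of_surjective J.mkQ_surjective (hJU ▸ hs)⟩
      have h := finrank_sup_add_finrank_inf_eq J U
      rw [hs, hd.eq_bot, finrank_bot, hY] at h
      omega
  rw [hfiber, ncard_setOf_disjoint_sup_eq hJY, hY, Nat.add_sub_cancel]

theorem ncard_setOf_finrank_eq_le_disjoint {I J : Submodule F V}
    (hIJ : Disjoint I J) {k : ℕ} (hk : finrank F I ≤ k) :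
    {U : Submodule F V | finrank F U = k ∧ I ≤ U ∧ Disjoint J U}.ncard
      = Fintype.card F ^ (finrank F J * (k - finrank F I))
        * numSubspaces F (finrank F V - finrank F I - finrank F J) (k - finrank F I) := by
  have : Finite (V ⧸ I) := Module.finite_of_finite F
  have hJ : Disjoint J (LinearMap.ker I.mkQ) := by rw [ker_mkQ]; exact hIJ.symm
  have hrank {U : Submodule F V} (hIU : I ≤ U) :
      finrank F (U.map I.mkQ) + finrank F I = finrank F U := by
    have h := finrank_map_add_finrank_ker_of_le (f := I.mkQ) (U := U) (by rwa [ker_mkQ])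
    rwa [ker_mkQ] at h
  have : {U : Submodule F V | finrank F U = k ∧ I ≤ U ∧ Disjoint J U}
      = {U | I ≤ U ∧ (finrank F (U.map I.mkQ) = k - finrank F I ∧
          Disjoint (J.map I.mkQ) (U.map I.mkQ))} := by
    ext U
    constructor
    · rintro ⟨hU, hIU, hJU⟩
      have := hrank hIU
      exact ⟨hIU, by omega, disjoint_map_of_ker_le_right hJU (by rwa [ker_mkQ])⟩
    · rintro ⟨hIU, hU, hJU⟩
      have := hrank hIU
      exact ⟨by omega, hIU, disjoint_of_disjoint_map hJ hJU⟩
  rw [this, ncard_setOf_le_map_mkQ I (fun W => finrank F W = k - finrank F I ∧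
      Disjoint (J.map I.mkQ) W), ncard_setOf_finrank_eq_disjoint, finrank_map_of_disjoint_ker hJ,
    finrank_quotient, Nat.sub_sub]

theorem ncard_setOf_finrank_eq_le {I : Submodule F V} {k : ℕ}
    (hk : finrank F I ≤ k) :
    {U : Submodule F V | finrank F U = k ∧ I ≤ U}.ncard
      = numSubspaces F (finrank F V - finrank F I) (k - finrank F I) := by
  simpa using ncard_setOf_finrank_eq_le_disjoint (J := ⊥) disjoint_bot_right hk

theorem ncard_setOf_finrank_eq_le_le {I X : Submodule F V} (hIX : I ≤ X)
    {k : ℕ} (hk : finrank F I ≤ k) :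
    {U : Submodule F V | finrank F U = k ∧ I ≤ U ∧ U ≤ X}.ncard
      = numSubspaces F (finrank F X - finrank F I) (k - finrank F I) := by
  have : {U : Submodule F V | finrank F U = k ∧ I ≤ U ∧ U ≤ X}
      = {U | U ≤ X ∧ (finrank F (U.comap X.subtype) = k ∧
          I.comap X.subtype ≤ U.comap X.subtype)} := by
    ext U
    constructor
    · rintro ⟨hU, hIU, hUX⟩
      exact ⟨hUX, by rwa [finrank_comap_subtype_of_le hUX], comap_mono hIU⟩
    · rintro ⟨hUX, hU, hIU⟩
      refine ⟨by rwa [finrank_comap_subtype_of_le hUX] at hU, ?_, hUX⟩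
      exact (comap_le_comap_iff_of_le_range (by rwa [range_subtype])).1 hIU
  rw [this, ncard_setOf_le_comap_subtype X (fun W => finrank F W = k ∧ I.comap X.subtype ≤ W),
    ncard_setOf_finrank_eq_le (by rwa [finrank_comap_subtype_of_le hIX]),
    finrank_comap_subtype_of_le hIX]

end Counting

section Designs

variable {F V : Type*} [Field F] [AddCommGroup V] [Module F V] [Finite V]

theorem ncard_le_disjoint_eq_add_finsum (E : Set (Submodule F V)) (I J : Submodule F V) {v : V}
    (hv : v ∉ J) :
    {U ∈ E | I ≤ U ∧ Disjoint J U}.ncard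
      = {U ∈ E | I ≤ U ∧ Disjoint (J ⊔ span F {v}) U}.ncard
        + ∑ᶠ w ∈ (J : Set V), {U ∈ E | I ⊔ span F {w + v} ≤ U ∧ Disjoint J U}.ncard := by
  have hunion : {U ∈ E | I ≤ U ∧ Disjoint J U}
      = {U ∈ E | I ≤ U ∧ Disjoint (J ⊔ span F {v}) U}
        ∪ ⋃ w ∈ (J : Set V), {U ∈ E | I ⊔ span F {w + v} ≤ U ∧ Disjoint J U} := by
    ext U
    constructor
    · rintro ⟨hE, hIU, hJU⟩
      by_cases h : Disjoint (J ⊔ span F {v}) U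
      · exact Or.inl ⟨hE, hIU, h⟩
      · obtain ⟨w, hw, hwv⟩ := (not_disjoint_sup_span_singleton_iff hv hJU).1 h
        exact Or.inr (Set.mem_biUnion hw
          ⟨hE, sup_le hIU ((span_singleton_le_iff_mem _ _).2 hwv), hJU⟩)
    · rintro (⟨hE, hIU, h⟩ | hU)
      · exact ⟨hE, hIU, h.mono_left le_sup_left⟩
      · obtain ⟨w, -, hE, hle, hJU⟩ := Set.mem_iUnion₂.1 hU
        exact ⟨hE, le_sup_left.trans hle, hJU⟩
  have hmem {w : V} {U : Submodule F V}
      (hU : U ∈ {U ∈ E | I ⊔ span F {w + v} ≤ U ∧ Disjoint J U}) : w + v ∈ U :=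
    hU.2.1 (mem_sup_right (mem_span_singleton_self _))
  rw [hunion, Set.ncard_union_eq,
    (Set.toFinite (J : Set V)).ncard_biUnion (fun _ _ => Set.toFinite _)]
  · intro w hw w' hw' hne
    refine Set.disjoint_left.2 fun U hU hU' => hne (sub_eq_zero.1 ?_)
    exact disjoint_def.1 hU.2.2 _ (J.sub_mem hw hw') (by simpa using U.sub_mem (hmem hU) (hmem hU'))
  · refine Set.disjoint_left.2 fun U hA hU => ?_
    obtain ⟨w, hw, hU⟩ := Set.mem_iUnion₂.1 hU
    exact (not_disjoint_sup_span_singleton_iff hv hU.2.2).2 ⟨w, hw, hmem hU⟩ hA.2.2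

variable [Fintype F]

theorem ncard_le_mul_numSubspaces_eq_finsum {r k : ℕ} {E : Set (Submodule F V)}
    (hE : ∀ U ∈ E, finrank F U = r) {I : Submodule F V} (hk : finrank F I ≤ k) :
    {U ∈ E | I ≤ U}.ncard * numSubspaces F (r - finrank F I) (k - finrank F I)
      = ∑ᶠ T ∈ {T : Submodule F V | finrank F T = k ∧ I ≤ T}, {U ∈ E | T ≤ U}.ncard := by
  classical
  set 𝒯 := {T : Submodule F V | finrank F T = k ∧ I ≤ T}
  set E' := {U ∈ E | I ≤ U}
  have h := Finset.sum_card_bipartiteAbove_eq_sum_card_bipartiteBelow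
    (s := (Set.toFinite E').toFinset) (t := (Set.toFinite 𝒯).toFinset) (r := fun U T => T ≤ U)
  rw [finsum_mem_eq_finite_toFinset_sum _ (Set.toFinite 𝒯), Set.ncard_eq_toFinset_card E',
    ← smul_eq_mul, ← Finset.sum_const]
  convert h using 2 with U hU T hT
  · rw [← Set.ncard_coe_finset, Finset.coe_bipartiteAbove]
    simp only [Set.Finite.mem_toFinset] at hU ⊢
    rw [← hE U hU.1, ← ncard_setOf_finrank_eq_le_le hU.2 hk]
    congr 1
    ext T
    exact and_assoc.symm
  · rw [← Set.ncard_coe_finset, Finset.coe_bipartiteBelow]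
    simp only [Set.Finite.mem_toFinset] at hT ⊢
    congr 1
    ext U
    exact ⟨fun ⟨hU, hTU⟩ => ⟨⟨hU, hT.2.trans hTU⟩, hTU⟩, fun ⟨⟨hU, _⟩, hTU⟩ => ⟨hU, hTU⟩⟩

theorem mul_ncard_le_eq_of_finrank_le {r t a b : ℕ} {E E' : Set (Submodule F V)}
    (hE : ∀ U ∈ E, finrank F U = r) (hE' : ∀ U ∈ E', finrank F U = r) (htr : t ≤ r)
    (h : ∀ T : Submodule F V, finrank F T = t →
      a * {U ∈ E | T ≤ U}.ncard = b * {U ∈ E' | T ≤ U}.ncard)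
    {I : Submodule F V} (hI : finrank F I ≤ t) :
    a * {U ∈ E | I ≤ U}.ncard = b * {U ∈ E' | I ≤ U}.ncard := by
  refine Nat.eq_of_mul_eq_mul_right (numSubspaces_pos_s7 F (Nat.sub_le_sub_right htr (finrank F I))) ?_
  rw [mul_assoc, mul_assoc, ncard_le_mul_numSubspaces_eq_finsum hE hI,
    ncard_le_mul_numSubspaces_eq_finsum hE' hI, mul_finsum_mem, mul_finsum_mem]
  exact finsum_mem_congr rfl fun T hT => h T hT.1

theorem mul_ncard_le_disjoint_eq_of_finrank_add_le {r t a b : ℕ} {E E' : Set (Submodule F V)}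
    (hE : ∀ U ∈ E, finrank F U = r) (hE' : ∀ U ∈ E', finrank F U = r) (htr : t ≤ r)
    (h : ∀ T : Submodule F V, finrank F T = t →
      a * {U ∈ E | T ≤ U}.ncard = b * {U ∈ E' | T ≤ U}.ncard)
    {I J : Submodule F V} (hIJ : finrank F I + finrank F J ≤ t) :
    a * {U ∈ E | I ≤ U ∧ Disjoint J U}.ncard = b * {U ∈ E' | I ≤ U ∧ Disjoint J U}.ncard := by
  obtain ⟨j, hj⟩ : ∃ j, finrank F J = j := ⟨_, rfl⟩
  induction j generalizing I J with
  | zero =>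
    rw [finrank_eq_zero.1 hj]
    simpa only [disjoint_bot_left, and_true] using
      mul_ncard_le_eq_of_finrank_le hE hE' htr h (I := I) (by omega)
  | succ j ih =>
    obtain ⟨J, v, hJ, hv, rfl⟩ := exists_eq_sup_span_singleton hj
    have hJv := ih (I := I) (by omega) hJ
    have hw (w : V) : a * {U ∈ E | I ⊔ span F {w + v} ≤ U ∧ Disjoint J U}.ncard
        = b * {U ∈ E' | I ⊔ span F {w + v} ≤ U ∧ Disjoint J U}.ncard :=
      ih (by have := finrank_sup_span_singleton_le I (w + v); omega) hJ
    rw [ncard_le_disjoint_eq_add_finsum E I J hv, ncard_le_disjoint_eq_add_finsum E' I J hv,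
      mul_add, mul_add, mul_finsum_mem, mul_finsum_mem, finsum_mem_congr rfl fun w _ => hw w]
      at hJv
    exact Nat.add_right_cancel hJv

end Designs

theorem stmt_7_general {F : Type*} [Field F] [Fintype F] {n r t lam i j : ℕ}
    (htr : t ≤ r)
    (D : Set (Submodule F (Fin n → F)))
    (hblocks : ∀ U ∈ D, Module.finrank F U = r)
    (hdesign : ∀ T : Submodule F (Fin n → F), Module.finrank F T = t →
      {U ∈ D | T ≤ U}.ncard = lam)
    (I J : Submodule F (Fin n → F))
    (hI : Module.finrank F I = i) (hJ : Module.finrank F J = j)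
    (hij : i + j ≤ t) (hIJ : I ⊓ J = ⊥) :
    {U ∈ D | I ≤ U ∧ J ⊓ U = ⊥}.ncard * numSubspaces F (n - t) (r - t) =
      (Fintype.card F) ^ (j * (r - i)) * lam * numSubspaces F (n - i - j) (r - i) := by
  have hE (T : Submodule F (Fin n → F)) (hT : finrank F T = t) :
      numSubspaces F (n - t) (r - t) * {U ∈ D | T ≤ U}.ncard
        = lam * {U : Submodule F (Fin n → F) | finrank F U = r ∧ T ≤ U}.ncard := by
    rw [hdesign T hT, ncard_setOf_finrank_eq_le (hT.trans_le htr), hT, finrank_fin_fun, mul_comm]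
  have key : numSubspaces F (n - t) (r - t) * {U ∈ D | I ≤ U ∧ Disjoint J U}.ncard
      = lam * {U : Submodule F (Fin n → F) | finrank F U = r ∧ I ≤ U ∧ Disjoint J U}.ncard :=
    mul_ncard_le_disjoint_eq_of_finrank_add_le (E' := {U | finrank F U = r}) hblocks
      (fun _ hU => hU) htr hE (by omega)
  rw [ncard_setOf_finrank_eq_le_disjoint (disjoint_iff.2 hIJ) (by omega), hI, hJ,
    finrank_fin_fun] at key
  simp only [← disjoint_iff]
  rw [mul_comm, key]
  ring

theorem stmt_7 {F : Type*} [Field F] [Fintype F] {n r t lam i j : ℕ}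
    (htpos : 1 ≤ t) (htr : t ≤ r) (hrn : r ≤ n)
    (D : Set (Submodule F (Fin n → F)))
    (hblocks : ∀ U ∈ D, Module.finrank F U = r)
    (hdesign : ∀ T : Submodule F (Fin n → F), Module.finrank F T = t →
      {U ∈ D | T ≤ U}.ncard = lam)
    (I J : Submodule F (Fin n → F))
    (hI : Module.finrank F I = i) (hJ : Module.finrank F J = j)
    (hij : i + j ≤ t) (hIJ : I ⊓ J = ⊥) :
    {U ∈ D | I ≤ U ∧ J ⊓ U = ⊥}.ncard * numSubspaces F (n - t) (r - t) =
      (Fintype.card F) ^ (j * (r - i)) * lam * numSubspaces F (n - i - j) (r - i) :=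
  stmt_7_general htr D hblocks hdesign I J hI hJ hij hIJ
end

section
/- Singleton bound for rank metric codes: if C ⊆ F_q^{n×m} is an F_q-linear code with minimum rank distance d and F_q-dimension k, then k ≤ max(n,m) · (min(n,m) − d + 1). -/
open Matrix

lemma rank_pos_aux {F : Type*} [Field F] {n m : ℕ}
    (X : Matrix (Fin n) (Fin m) F) (hX : X ≠ 0) : 1 ≤ X.rank := by
  rw [Nat.one_le_iff_ne_zero]
  intro hr
  apply hX
  have hbot : LinearMap.range X.mulVecLin = ⊥ := Submodule.finrank_eq_zero.mp hr
  have h0 : X.mulVecLin = 0 := LinearMap.range_eq_bot.mp hbot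
  ext i j
  have := congrFun (LinearMap.congr_fun h0 (Pi.single j 1)) i
  simpa [Matrix.mulVec_single] using this

lemma singleton_aux {F : Type*} [Field F] [Fintype F] {n m d : ℕ}
    (hd : 1 ≤ d) (hdn : d ≤ n)
    (C : Submodule F (Matrix (Fin n) (Fin m) F))
    (hmin : ∀ X ∈ C, X ≠ 0 → d ≤ X.rank) :
    Module.finrank F C ≤ (n - d + 1) * m := by
  set t : ℕ := n - d + 1 with ht_def
  have ht : t ≤ n := by omega
  let f : Matrix (Fin n) (Fin m) F →ₗ[F] Matrix (Fin t) (Fin m) F :=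
    { toFun := fun X => X.submatrix (Fin.castLE ht) id
      map_add' := fun X Y => rfl
      map_smul' := fun c X => rfl }
  have hinj : Function.Injective (f.domRestrict C) := by
    rw [← LinearMap.ker_eq_bot]
    ext ⟨X, hX⟩
    simp only [LinearMap.mem_ker, Submodule.mem_bot]
    constructor
    · intro hfX
      have hfX' : X.submatrix (Fin.castLE ht) id = 0 := hfX
      have hzero : ∀ i : Fin n, (i : ℕ) < t → ∀ j, X i j = 0 := by
        intro i hi j
        have := congrFun (congrFun hfX' (⟨i, hi⟩ : Fin t)) j
        simpa [Fin.castLE] using this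
      have hXzero : X = 0 := by
        by_contra hne
        let Y : Matrix (Fin (d - 1)) (Fin m) F :=
          X.submatrix (fun j : Fin (d - 1) => (⟨t + j, by omega⟩ : Fin n)) id
        let E : Matrix (Fin n) (Fin (d - 1)) F :=
          fun i j => if (i : ℕ) = t + j then 1 else 0
        have hfact : X = E * Y := by
          ext i k
          rw [Matrix.mul_apply]
          by_cases hi : (i : ℕ) < t
          · rw [hzero i hi k]
            symm
            apply Finset.sum_eq_zero
            intro j _
            have : (i : ℕ) ≠ t + j := by omega
            simp [E, this]
          · have hid : (i : ℕ) - t < d - 1 := by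
              have := i.isLt; omega
            rw [Finset.sum_eq_single (⟨(i : ℕ) - t, hid⟩ : Fin (d - 1))]
            · have hij : (i : ℕ) = t + ((⟨(i : ℕ) - t, hid⟩ : Fin (d - 1)) : ℕ) := by
                show (i : ℕ) = t + ((i : ℕ) - t)
                omega
              rw [show E i ⟨(i : ℕ) - t, hid⟩ = 1 from if_pos hij, one_mul]
              show X i k = X ⟨t + ((i : ℕ) - t), _⟩ k
              congr 1
              exact Fin.ext (by simp; omega)
            · intro j _ hj
              have hne2 : (i : ℕ) ≠ t + j := by
                intro h
                apply hj
                apply Fin.ext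
                show (j : ℕ) = (i : ℕ) - t
                omega
              simp [E, hne2]
            · intro h; exact absurd (Finset.mem_univ _) h
        have hrank : X.rank ≤ d - 1 := by
          calc X.rank = (E * Y).rank := by rw [← hfact]
            _ ≤ Y.rank := Matrix.rank_mul_le_right E Y
            _ ≤ Fintype.card (Fin (d - 1)) := Y.rank_le_card_height
            _ = d - 1 := Fintype.card_fin _
        have := hmin X hX hne
        omega
      exact Subtype.ext hXzero
    · intro h
      have hX0 : X = 0 := congrArg Subtype.val h
      show f X = 0
      rw [hX0, map_zero]
  have h1 : Module.finrank F C ≤ Module.finrank F (Matrix (Fin t) (Fin m) F) :=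
    LinearMap.finrank_le_finrank_of_injective hinj
  calc Module.finrank F C ≤ Module.finrank F (Matrix (Fin t) (Fin m) F) := h1
    _ = t * m := by rw [Module.finrank_matrix]; simp
    _ = (n - d + 1) * m := rfl

theorem stmt_8 {F : Type*} [Field F] [Fintype F] {n m d : ℕ}
    (C : Submodule F (Matrix (Fin n) (Fin m) F))
    (hmin : ∀ X ∈ C, X ≠ 0 → d ≤ X.rank)
    (hex : ∃ X ∈ C, X ≠ 0 ∧ X.rank = d) :
    Module.finrank F C ≤ max n m * (min n m - d + 1) := by
  obtain ⟨X, hXC, hX0, hXr⟩ := hex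
  have hd1 : 1 ≤ d := hXr ▸ rank_pos_aux X hX0
  have hdn : d ≤ n := by
    calc d = X.rank := hXr.symm
      _ ≤ Fintype.card (Fin n) := X.rank_le_card_height
      _ = n := Fintype.card_fin _
  have hdm : d ≤ m := by
    calc d = X.rank := hXr.symm
      _ ≤ Fintype.card (Fin m) := X.rank_le_card_width
      _ = m := Fintype.card_fin _
  rcases le_total n m with h | h
  · rw [max_eq_right h, min_eq_left h]
    calc Module.finrank F C ≤ (n - d + 1) * m := singleton_aux hd1 hdn C hmin
      _ = m * (n - d + 1) := Nat.mul_comm _ _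
  · rw [max_eq_left h, min_eq_right h]
    let e : Matrix (Fin n) (Fin m) F ≃ₗ[F] Matrix (Fin m) (Fin n) F :=
      Matrix.transposeLinearEquiv (Fin n) (Fin m) F F
    let C' : Submodule F (Matrix (Fin m) (Fin n) F) := C.map (e : _ →ₗ[F] _)
    have hmin' : ∀ Y ∈ C', Y ≠ 0 → d ≤ Y.rank := by
      rintro Y hY hY0
      obtain ⟨Z, hZC, rfl⟩ := hY
      have hZ0 : Z ≠ 0 := by
        intro h
        apply hY0
        rw [h, map_zero]
      rw [show ((e : Matrix (Fin n) (Fin m) F →ₗ[F] Matrix (Fin m) (Fin n) F) Z) = Zᵀ from rfl,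
        Matrix.rank_transpose]
      exact hmin Z hZC hZ0
    have heq : Module.finrank F C' = Module.finrank F C :=
      LinearEquiv.finrank_map_eq e C
    calc Module.finrank F C = Module.finrank F C' := heq.symm
      _ ≤ (m - d + 1) * n := singleton_aux hd1 hdm C' hmin'
      _ = n * (m - d + 1) := Nat.mul_comm _ _
end

section
/- MRD criterion via projection: assume m ≥ n and let C ⊆ F_q^{n×m} be an F_q-linear code with minimum rank distance d. Then C is MRD (i.e., dim C = m(n−d+1)) if and only if the projection of C onto the last n−d+1 rows, C → F_q^{(n−d+1)×m}, is surjective. -/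
/-- Delete the first `t` rows of an `n × m` matrix (the projection `π_t`). -/
def dropRows {F : Type*} {n m t : ℕ} (h : t ≤ n) (X : Matrix (Fin n) (Fin m) F) :
    Matrix (Fin (n - t)) (Fin m) F :=
  Matrix.of fun i j => X (Fin.cast (by omega) (Fin.natAdd t i)) j

/-- `dropRows` as a linear map. -/
def dropRowsLin (F : Type*) [Semiring F] {n m t : ℕ} (h : t ≤ n) :
    Matrix (Fin n) (Fin m) F →ₗ[F] Matrix (Fin (n - t)) (Fin m) F where
  toFun := dropRows h
  map_add' X Y := rfl
  map_smul' c X := rfl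

lemma rank_le_of_dropRows_eq_zero {F : Type*} [Field F] {n m t : ℕ} (h : t ≤ n)
    (X : Matrix (Fin n) (Fin m) F) (hX : dropRows h X = 0) : X.rank ≤ t := by
  set B : Matrix (Fin n) (Fin t) F := Matrix.of fun i j => if (i : ℕ) = (j : ℕ) then 1 else 0
  set T : Matrix (Fin t) (Fin m) F := X.submatrix (Fin.castLE h) id
  have hzero : ∀ i : Fin n, t ≤ (i : ℕ) → ∀ k, X i k = 0 := by
    intro i hi k
    have hi' : (i : ℕ) - t < n - t := by omega
    have := congrFun (congrFun hX ⟨(i : ℕ) - t, hi'⟩) k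
    simpa [dropRows, Fin.ext_iff, show t + ((i : ℕ) - t) = (i : ℕ) by omega] using this
  have hXBT : X = B * T := by
    ext i k
    rw [Matrix.mul_apply]
    by_cases hi : (i : ℕ) < t
    · rw [Finset.sum_eq_single (⟨(i : ℕ), hi⟩ : Fin t)]
      · simp [B, T, Fin.ext_iff]
      · intro j _ hj
        have : (i : ℕ) ≠ (j : ℕ) := by
          intro hc; exact hj (by simpa [Fin.ext_iff] using hc.symm)
        simp [B, this]
      · intro hmem; exact absurd (Finset.mem_univ _) hmem
    · rw [hzero i (by omega) k]
      symm
      apply Finset.sum_eq_zero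
      intro j _
      have : (i : ℕ) ≠ (j : ℕ) := by omega
      simp [B, this]
  calc X.rank = (B * T).rank := by rw [hXBT]
    _ ≤ T.rank := Matrix.rank_mul_le_right B T
    _ ≤ Fintype.card (Fin t) := T.rank_le_card_height
    _ = t := Fintype.card_fin t

theorem stmt_13 {F : Type*} [Field F] [Fintype F] {n m d : ℕ}
    (hnm : n ≤ m) (hd1 : 1 ≤ d) (hdn : d ≤ n)
    (C : Submodule F (Matrix (Fin n) (Fin m) F))
    (hmin : ∀ X ∈ C, X ≠ 0 → d ≤ X.rank)
    (hex : ∃ X ∈ C, X ≠ 0 ∧ X.rank = d) :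
    Module.finrank F C = m * (n - d + 1) ↔
      ∀ Y : Matrix (Fin (n - (d - 1))) (Fin m) F,
        ∃ X ∈ C, dropRows (show d - 1 ≤ n by omega) X = Y := by
  have h : d - 1 ≤ n := by omega
  set f : C →ₗ[F] Matrix (Fin (n - (d - 1))) (Fin m) F :=
    (dropRowsLin F h).comp C.subtype with hf
  have hinj : Function.Injective f := by
    rw [← LinearMap.ker_eq_bot]
    rw [Submodule.eq_bot_iff]
    rintro ⟨X, hXC⟩ hXk
    have hdrop : dropRows h X = 0 := hXk
    ext
    by_contra hne
    have hX0 : X ≠ 0 := by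
      intro hc; subst hc; exact hne rfl
    have h1 := hmin X hXC hX0
    have h2 := rank_le_of_dropRows_eq_zero h X hdrop
    omega
  have hrange : Module.finrank F C = Module.finrank F (LinearMap.range f) :=
    (LinearMap.finrank_range_of_inj hinj).symm
  have hVdim : Module.finrank F (Matrix (Fin (n - (d - 1))) (Fin m) F) = m * (n - d + 1) := by
    rw [Module.finrank_matrix, Module.finrank_self, Fintype.card_fin, Fintype.card_fin,
      show n - (d - 1) = n - d + 1 by omega, Nat.mul_one, Nat.mul_comm]
  constructor
  · intro hdim Y
    have htop : LinearMap.range f = ⊤ := by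
      apply Submodule.eq_top_of_finrank_eq
      rw [← hrange, hdim, hVdim]
    have : Y ∈ LinearMap.range f := htop ▸ Submodule.mem_top
    obtain ⟨⟨X, hXC⟩, hXY⟩ := this
    exact ⟨X, hXC, hXY⟩
  · intro hsurj
    have htop : LinearMap.range f = ⊤ := by
      rw [LinearMap.range_eq_top]
      intro Y
      obtain ⟨X, hXC, hXY⟩ := hsurj Y
      exact ⟨⟨X, hXC⟩, hXY⟩
    rw [hrange, htop, finrank_top, hVdim]
end

section
/- If C ⊆ F_q^{n×m} is an F_q-linear code (with m,n ≥ 2) whose dual C* has exactly one non-zero rank weight, then the minimum rank distance of C is at most 2. -/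
open Matrix

/-- The dual code with respect to the trace bilinear form `⟨X, Y⟩ = Tr(X Yᵀ)`. -/
def dualCode {F : Type*} [Field F] {n m : ℕ} (C : Set (Matrix (Fin n) (Fin m) F)) :
    Set (Matrix (Fin n) (Fin m) F) :=
  {Y | ∀ X ∈ C, Matrix.trace (X * Yᵀ) = 0}

/-!
Suppose every nonzero `X ∈ C` has rank at least `3`, every nonzero `Y ∈ D := C^⊥` has rank `w`,
and let `k = dim D`. If `Y ↦ Y Vᵀ` from `D` to `F^{n×r}` were not onto for some `V` with `r ≤ 2`
independent rows, a nonzero `B` orthogonal to its image would give the nonzero codeword `B V` of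
`C = D^⊥`, of rank `≤ r`. Hence `k ≥ 2n`, and `Y ↦ Y v` maps `D` onto `F^n` for every `v ≠ 0`.
Counting the pairs `(Y, v) ∈ D × F^m` with `Y v = 0` in two ways gives
`q^m + (q^k - 1) q^(m-w) = q^k + (q^m - 1) q^(k-n)`,
and the transposed code gives the same identity with `n` and `m` exchanged. These force `w < n`
and `w < m`, and then the first identity is impossible since `q^(k+m-w) ≥ q^(k+m-n+1)`.
-/

namespace RankMetric

open Module Function Finset
open LinearMap (BilinForm)

theorem lt_of_pow_add_eq {q a b k w : ℕ} (hq : 2 ≤ q) (ha : 1 ≤ a) (hbk : b < k)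
    (h : q ^ a + (q ^ k - 1) * q ^ (a - w) = q ^ k + (q ^ a - 1) * q ^ (k - b)) : w < a := by
  by_contra! hwa
  rw [Nat.sub_eq_zero_of_le hwa, pow_zero, mul_one] at h
  have hX : 2 ≤ q ^ a := le_self_pow₀ (by omega) (by omega) |>.trans' hq
  have hY : 2 ≤ q ^ (k - b) := le_self_pow₀ (by omega) (by omega) |>.trans' hq
  have hx : 1 ≤ q ^ k := Nat.one_le_pow _ _ (by omega)
  have hXY : (q ^ a - 1) * q ^ (k - b) = (q ^ a - 1) * 1 := by omega
  have hY1 := Nat.eq_of_mul_eq_mul_left (by omega) hXY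
  omega

theorem false_of_pow_add_eq {q a b k w : ℕ} (hq : 2 ≤ q) (hwa : w < a) (hwb : w < b)
    (hbk : b ≤ k)
    (h : q ^ a + (q ^ k - 1) * q ^ (a - w) = q ^ k + (q ^ a - 1) * q ^ (k - b)) : False := by
  have two_le_pow : ∀ {e}, 1 ≤ e → 2 ≤ q ^ e := fun he =>
    le_self_pow₀ (by omega) (by omega) |>.trans' hq
  have hx := two_le_pow (e := k) (by omega)
  have hy := two_le_pow (e := a - w) (by omega)
  have hX := two_le_pow (e := a) (by omega)
  have hY : 1 ≤ q ^ (k - b) := Nat.one_le_pow _ _ (by omega)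
  have hexp : q * (q ^ a * q ^ (k - b)) ≤ q ^ k * q ^ (a - w) := by
    rw [← pow_add, ← pow_succ', ← pow_add]
    exact Nat.pow_le_pow_right (by omega) (by omega)
  -- With `x = q ^ k`, `y = q ^ (a - w)`, `2 q ^ a q ^ (k - b) ≤ x y` turns `h` into
  -- `x y + 2 (q ^ a + q ^ (k - b)) ≤ 2 (x + y)`, which `(x - 2) (y - 2) ≥ 0` contradicts.
  zify [hx.trans' one_le_two, hX.trans' one_le_two] at h hexp hx hy hX hY hq
  have hXY : (0 : ℤ) ≤ (q : ℤ) ^ a * (q : ℤ) ^ (k - b) := by positivity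
  nlinarith [mul_nonneg (sub_nonneg.2 hx) (sub_nonneg.2 hy), mul_nonneg (sub_nonneg.2 hq) hXY]

theorem sum_eq_add_card_sub_one_mul {α : Type*} [Fintype α] [DecidableEq α] (f : α → ℕ) (a : α)
    {b : ℕ} (h : ∀ x, x ≠ a → f x = b) : ∑ x, f x = f a + (Fintype.card α - 1) * b := by
  rw [← add_sum_erase _ _ (mem_univ a), sum_congr rfl fun x hx => h x (ne_of_mem_erase hx),
    sum_const, card_erase_of_mem (mem_univ a), card_univ, smul_eq_mul]

variable {F : Type*} [Field F] {ι κ : Type*}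

def transposeCode (C : Submodule F (Matrix ι κ F)) : Submodule F (Matrix κ ι F) :=
  C.comap (transposeLinearEquiv κ ι F F).toLinearMap

lemma mem_transposeCode {C : Submodule F (Matrix ι κ F)} {X : Matrix κ ι F} :
    X ∈ transposeCode C ↔ Xᵀ ∈ C := Iff.rfl

lemma finrank_transposeCode (C : Submodule F (Matrix ι κ F)) :
    finrank F (transposeCode C) = finrank F C := by
  rw [transposeCode, Submodule.comap_equiv_eq_map_symm]
  exact LinearEquiv.finrank_map_eq _ C

lemma forall_mem_transposeCode_rank [Fintype ι] [Fintype κ] {C : Submodule F (Matrix ι κ F)}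
    {P : ℕ → Prop} (h : ∀ X ∈ C, X ≠ 0 → P X.rank) :
    ∀ X ∈ transposeCode C, X ≠ 0 → P X.rank := fun X hX hX0 => by
  simpa only [rank_transpose] using h Xᵀ hX (mt transpose_eq_zero.1 hX0)

variable [Fintype ι] [Fintype κ]

variable (F ι κ) in
def traceForm : BilinForm F (Matrix ι κ F) :=
  LinearMap.mk₂ F (fun X Y => trace (X * Yᵀ))
    (fun X X' Y => by simp only [Matrix.add_mul, trace_add])
    (fun c X Y => by simp only [Matrix.smul_mul, trace_smul])
    (fun X Y Y' => by simp only [transpose_add, Matrix.mul_add, trace_add])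
    (fun c X Y => by simp only [transpose_smul, Matrix.mul_smul, trace_smul])

@[simp] lemma traceForm_apply (X Y : Matrix ι κ F) : traceForm F ι κ X Y = trace (X * Yᵀ) := rfl

lemma traceForm_isSymm : (traceForm F ι κ).IsSymm :=
  ⟨fun X Y => by rw [traceForm_apply, ← trace_transpose, transpose_mul, transpose_transpose]; rfl⟩

lemma traceForm_nondegenerate : (traceForm F ι κ).Nondegenerate :=
  .ofSeparatingLeft fun X hX => by
    classical
    ext i j
    simpa [trace_mul_single] using hX (single i j 1)

lemma traceForm_orthogonal_orthogonal (C : Submodule F (Matrix ι κ F)) :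
    (traceForm F ι κ).orthogonal ((traceForm F ι κ).orthogonal C) = C :=
  LinearMap.BilinForm.orthogonal_orthogonal traceForm_nondegenerate traceForm_isSymm.isRefl C

lemma traceForm_orthogonal_ne_bot {W : Submodule F (Matrix ι κ F)} (hW : W ≠ ⊤) :
    (traceForm F ι κ).orthogonal W ≠ ⊥ := fun h => hW <| by
  rw [← traceForm_orthogonal_orthogonal W, h, LinearMap.BilinForm.orthogonal_bot]

lemma traceForm_orthogonal_transposeCode (C : Submodule F (Matrix ι κ F)) :
    (traceForm F κ ι).orthogonal (transposeCode C) =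
      transposeCode ((traceForm F ι κ).orthogonal C) := by
  ext Y
  simp only [mem_transposeCode, LinearMap.BilinForm.mem_orthogonal_iff, traceForm_apply,
    transpose_transpose]
  constructor
  · intro h X hX
    simpa using h Xᵀ (by simpa using hX)
  · intro h X hX
    rw [← trace_transpose_mul, transpose_transpose]
    exact h Xᵀ hX

theorem exists_rank_le_of_not_surjective {r : Type*} [Fintype r]
    (D : Submodule F (Matrix ι κ F)) {V : Matrix r κ F} (hV : LinearIndependent F V.row)
    (h : ¬ Surjective ((mulRightLinearMap ι F Vᵀ).domRestrict D)) :
    ∃ X ∈ (traceForm F ι κ).orthogonal D, X ≠ 0 ∧ X.rank ≤ Fintype.card r := by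
  rw [← LinearMap.range_eq_top] at h
  obtain ⟨B, hB, hB0⟩ := Submodule.exists_mem_ne_zero_of_ne_bot (traceForm_orthogonal_ne_bot h)
  refine ⟨B * V, fun Y hY => ?_, fun hBV => hB0 ?_, ?_⟩
  · have hBY := hB (Y * Vᵀ) ⟨⟨Y, hY⟩, rfl⟩
    rwa [traceForm_apply, transpose_mul, ← Matrix.mul_assoc]
  · funext i
    have hBi : B i ᵥ* V = 0 ᵥ* V := by rw [zero_vecMul]; exact congrFun hBV i
    exact vecMul_injective_iff.2 hV hBi
  · exact (rank_mul_le_left B V).trans B.rank_le_card_width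

theorem surjective_of_lt_rank {r : Type*} [Fintype r] (C : Submodule F (Matrix ι κ F))
    (hC : ∀ X ∈ C, X ≠ 0 → Fintype.card r < X.rank) {V : Matrix r κ F}
    (hV : LinearIndependent F V.row) :
    Surjective ((mulRightLinearMap ι F Vᵀ).domRestrict ((traceForm F ι κ).orthogonal C)) := by
  by_contra h
  obtain ⟨X, hX, hX0, hXr⟩ := exists_rank_le_of_not_surjective _ hV h
  rw [traceForm_orthogonal_orthogonal] at hX
  exact (hC X hX hX0).not_ge hXr

theorem card_mul_card_le_finrank_orthogonal {r : Type*} [Fintype r]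
    (C : Submodule F (Matrix ι κ F)) (hr : Fintype.card r ≤ Fintype.card κ)
    (hC : ∀ X ∈ C, X ≠ 0 → Fintype.card r < X.rank) :
    Fintype.card ι * Fintype.card r ≤ finrank F ((traceForm F ι κ).orthogonal C) := by
  classical
  obtain ⟨e⟩ := Function.Embedding.nonempty_of_card_le hr
  let V : Matrix r κ F := fun i => Pi.basisFun F κ (e i)
  have hV : LinearIndependent F V.row := (Pi.basisFun F κ).linearIndependent.comp e e.injective
  have hrange := LinearMap.finrank_range_le ((mulRightLinearMap ι F Vᵀ).domRestrict
    ((traceForm F ι κ).orthogonal C))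
  rwa [LinearMap.range_eq_top.2 (surjective_of_lt_rank C hC hV), finrank_top, finrank_matrix,
    finrank_self, mul_one] at hrange

section Counting

open Classical

variable [Fintype F]

theorem card_filter_apply_eq_zero {V W : Type*} [AddCommGroup V] [Module F V] [Fintype V]
    [AddCommGroup W] [Module F W] (f : V →ₗ[F] W) [DecidablePred fun v => f v = 0] :
    #{v | f v = 0} = Fintype.card F ^ (finrank F V - finrank F (LinearMap.range f)) := by
  rw [← Fintype.card_subtype, ← Nat.card_eq_fintype_card, ← Nat.card_eq_fintype_card (α := F),
    ← LinearMap.finrank_range_add_finrank_ker f, Nat.add_sub_cancel_left]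
  exact Module.natCard_eq_pow_finrank (V := LinearMap.ker f)

theorem card_filter_mulVec_eq_zero (Y : Matrix ι κ F) :
    #{v : κ → F | Y *ᵥ v = 0} = Fintype.card F ^ (Fintype.card κ - Y.rank) := by
  have hY := card_filter_apply_eq_zero Y.mulVecLin
  rwa [finrank_fintype_fun_eq_card] at hY

theorem card_filter_orthogonal_mulVec_eq_zero (C : Submodule F (Matrix ι κ F))
    (hC : ∀ X ∈ C, X ≠ 0 → 1 < X.rank) {v : κ → F} (hv : v ≠ 0) :
    #{Y : (traceForm F ι κ).orthogonal C | (Y : Matrix ι κ F) *ᵥ v = 0} =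
      Fintype.card F ^ (finrank F ((traceForm F ι κ).orthogonal C) - Fintype.card ι) := by
  let f := (mulRightLinearMap ι F (replicateRow Unit v)ᵀ).domRestrict
    ((traceForm F ι κ).orthogonal C)
  have hf : Surjective f := surjective_of_lt_rank C (by simpa using hC)
    (linearIndependent_unique_iff.2 hv)
  have hker (Y : (traceForm F ι κ).orthogonal C) : (Y : Matrix ι κ F) *ᵥ v = 0 ↔ f Y = 0 := by
    rw [LinearMap.domRestrict_apply, mulRightLinearMap_apply, transpose_replicateRow,
      ← replicateCol_mulVec, ← replicateCol_zero, (replicateCol_injective).eq_iff]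
  simp_rw [hker]
  rw [card_filter_apply_eq_zero f, LinearMap.range_eq_top.2 hf, finrank_top, finrank_matrix]
  simp

theorem card_pow_add_eq_of_forall_rank_eq (C : Submodule F (Matrix ι κ F))
    (hC : ∀ X ∈ C, X ≠ 0 → 1 < X.rank) {w : ℕ}
    (hw : ∀ Y ∈ (traceForm F ι κ).orthogonal C, Y ≠ 0 → Y.rank = w) :
    Fintype.card F ^ Fintype.card κ +
        (Fintype.card F ^ finrank F ((traceForm F ι κ).orthogonal C) - 1) *
          Fintype.card F ^ (Fintype.card κ - w) =
      Fintype.card F ^ finrank F ((traceForm F ι κ).orthogonal C) +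
        (Fintype.card F ^ Fintype.card κ - 1) *
          Fintype.card F ^ (finrank F ((traceForm F ι κ).orthogonal C) - Fintype.card ι) := by
  set D := (traceForm F ι κ).orthogonal C
  have hpairs : ∑ Y : D, #{v | (Y : Matrix ι κ F) *ᵥ v = 0} =
      ∑ v : κ → F, #{Y : D | (Y : Matrix ι κ F) *ᵥ v = 0} :=
    sum_card_bipartiteAbove_eq_sum_card_bipartiteBelow _
  rw [sum_eq_add_card_sub_one_mul _ 0 (b := Fintype.card F ^ (Fintype.card κ - w)) fun Y hY => by
      rw [card_filter_mulVec_eq_zero, hw Y Y.2 (by simpa using hY)],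
    sum_eq_add_card_sub_one_mul _ 0 fun v hv => card_filter_orthogonal_mulVec_eq_zero C hC hv]
    at hpairs
  simp only [card_filter_mulVec_eq_zero, ZeroMemClass.coe_zero, rank_zero, Nat.sub_zero,
    mulVec_zero, filter_true, card_univ, Fintype.card_fun] at hpairs
  rwa [Module.card_eq_pow_finrank (K := F) (V := D)] at hpairs

end Counting

end RankMetric

open RankMetric in
theorem stmt_18_general {F : Type*} [Field F] [Fintype F] {n m : ℕ}
    (hn : 2 ≤ n) (hm : 2 ≤ m)
    (C : Submodule F (Matrix (Fin n) (Fin m) F))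
    (w : ℕ)
    (hall : ∀ Y ∈ dualCode (C : Set (Matrix (Fin n) (Fin m) F)), Y ≠ 0 → Y.rank = w) :
    ∃ X ∈ C, X ≠ 0 ∧ X.rank ≤ 2 := by
  by_contra! hC
  have hq : 2 ≤ Fintype.card F := Fintype.one_lt_card
  have hCT := forall_mem_transposeCode_rank hC
  -- `dualCode C` is `(traceForm F _ _).orthogonal C` unfolded
  replace hall : ∀ Y ∈ (traceForm F _ _).orthogonal C, Y ≠ 0 → Y.rank = w := hall
  have hallT := forall_mem_transposeCode_rank (P := (· = w)) hall
  rw [← traceForm_orthogonal_transposeCode] at hallT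
  have hk₁ := card_mul_card_le_finrank_orthogonal (r := Fin 2) C (by simpa) (by simpa)
  have hk₂ := card_mul_card_le_finrank_orthogonal (r := Fin 2) (transposeCode C) (by simpa)
    (by simpa)
  have e₁ := card_pow_add_eq_of_forall_rank_eq C
    (fun X hX hX0 => (hC X hX hX0).trans' one_lt_two) hall
  have e₂ := card_pow_add_eq_of_forall_rank_eq (transposeCode C)
    (fun X hX hX0 => (hCT X hX hX0).trans' one_lt_two) hallT
  rw [traceForm_orthogonal_transposeCode, finrank_transposeCode] at hk₂ e₂
  simp only [Fintype.card_fin] at hk₁ hk₂ e₁ e₂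
  exact false_of_pow_add_eq hq (lt_of_pow_add_eq hq (by omega) (by omega) e₁)
    (lt_of_pow_add_eq hq (by omega) (by omega) e₂) (by omega) e₁

theorem stmt_18 {F : Type*} [Field F] [Fintype F] {n m : ℕ}
    (hn : 2 ≤ n) (hm : 2 ≤ m)
    (C : Submodule F (Matrix (Fin n) (Fin m) F))
    (w : ℕ) (hw : 1 ≤ w)
    (hex : ∃ Y ∈ dualCode (C : Set (Matrix (Fin n) (Fin m) F)), Y ≠ 0 ∧ Y.rank = w)
    (hall : ∀ Y ∈ dualCode (C : Set (Matrix (Fin n) (Fin m) F)), Y ≠ 0 → Y.rank = w) :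
    ∃ X ∈ C, X ≠ 0 ∧ X.rank ≤ 2 :=
  stmt_18_general hn hm C w hall
end
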